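/- Let N and T be positive integers, let Δt > 0, let α ∈ ℝ, let w : Fin N → ℝ be basis weights, and let τ : Fin N → ℝ satisfy 0 < τ n for all n. Define the exponentially decaying spike intensities d n t = α·exp(−t·Δt/(τ n)) for t = 0, …, T−1, and let τ_max = max over n of τ n. Then (1/T)·Σ_{n=0}^{N−1} |w n| · Σ_{t=0}^{T−1} |d n t| ≤ (Σ_{n=0}^{N−1} |w n|) · |α| · (Δt + τ_max) / (T·Δt). -/

import Mathlib

lemma geo_exp_sum_le (T : ℕ) (x : ℝ) (hx : 0 < x) :
    ∑ t ∈ Finset.range T, Real.exp (-(t : ℝ) * x) ≤ (x + 1) / x := by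
  have hr0 : (0:ℝ) < Real.exp (-x) := Real.exp_pos _
  have hr1 : Real.exp (-x) < 1 := by
    rw [Real.exp_lt_one_iff]; linarith
  have heq : ∀ t : ℕ, Real.exp (-(t : ℝ) * x) = (Real.exp (-x)) ^ t := by
    intro t
    rw [← Real.exp_nat_mul]
    ring_nf
  calc ∑ t ∈ Finset.range T, Real.exp (-(t : ℝ) * x)
      = ∑ t ∈ Finset.range T, (Real.exp (-x)) ^ t := by
        exact Finset.sum_congr rfl (fun t _ => heq t)
    _ ≤ 1 / (1 - Real.exp (-x)) := by
        rw [geom_sum_eq (ne_of_lt hr1)]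
        have h1r : (0:ℝ) < 1 - Real.exp (-x) := by linarith
        have hpT : (0:ℝ) < (Real.exp (-x)) ^ T := pow_pos hr0 T
        have heq2 : ((Real.exp (-x)) ^ T - 1) / (Real.exp (-x) - 1)
            = (1 - (Real.exp (-x)) ^ T) / (1 - Real.exp (-x)) := by
          rw [← neg_div_neg_eq]; ring_nf
        rw [heq2, div_le_div_iff₀ h1r h1r]
        nlinarith
    _ ≤ (x + 1) / x := by
        have hexp : x + 1 ≤ Real.exp x := Real.add_one_le_exp x
        have h1 : Real.exp (-x) ≤ 1 / (x + 1) := by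
          rw [Real.exp_neg, inv_eq_one_div, div_le_div_iff₀ (Real.exp_pos x) (by linarith)]
          linarith
        have h2 : x / (x + 1) ≤ 1 - Real.exp (-x) := by
          have : x / (x + 1) = 1 - 1 / (x + 1) := by
            field_simp
            ring
          rw [this]; linarith
        rw [div_le_div_iff₀ (by linarith) hx]
        have hxx1 : (0:ℝ) < x + 1 := by linarith
        have := mul_le_mul_of_nonneg_left h2 (le_of_lt hxx1)
        calc 1 * x = (x + 1) * (x / (x + 1)) := by field_simp
          _ ≤ (x + 1) * (1 - Real.exp (-x)) := this
          _ = (x + 1) * (1 - Real.exp (-x)) := rfl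

/-- Quantization Gap bound for MBE neurons (Theorem 2): the weighted temporal
discretization error of the exponentially decaying spike intensities
`d n t = α·exp(−t·Δt/τ n)` is bounded by `‖w‖₁·|α|·(Δt + τ_max)/(T·Δt)`,
where `τ_max` is the maximum of the `τ n`. -/
theorem mbe_quantization_gap
    (N T : ℕ) (hN : 0 < N) (hT : 0 < T)
    (Δt : ℝ) (hΔt : 0 < Δt) (α : ℝ)
    (w τ : Fin N → ℝ) (hτ : ∀ n, 0 < τ n)
    (d : Fin N → ℕ → ℝ)
    (hd : ∀ n, ∀ t, d n t = α * Real.exp (-(t : ℝ) * Δt / τ n))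
    (τmax : ℝ) (hτmax : IsGreatest (Set.range τ) τmax) :
    (1 / (T : ℝ)) * ∑ n : Fin N, |w n| * ∑ t ∈ Finset.range T, |d n t|
      ≤ (∑ n : Fin N, |w n|) * |α| * (Δt + τmax) / ((T : ℝ) * Δt) := by
  have hT' : (0:ℝ) < T := by exact_mod_cast hT
  -- per-basis bound
  have hkey : ∀ n : Fin N, ∑ t ∈ Finset.range T, |d n t| ≤ |α| * (Δt + τmax) / Δt := by
    intro n
    have hτn := hτ n
    have hτle : τ n ≤ τmax := hτmax.2 ⟨n, rfl⟩
    have hx : 0 < Δt / τ n := div_pos hΔt hτn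
    have hsum : ∑ t ∈ Finset.range T, Real.exp (-(t : ℝ) * (Δt / τ n)) ≤ (Δt / τ n + 1) / (Δt / τ n) :=
      geo_exp_sum_le T _ hx
    have habs : ∀ t : ℕ, |d n t| = |α| * Real.exp (-(t : ℝ) * (Δt / τ n)) := by
      intro t
      rw [hd n t, abs_mul, abs_of_pos (Real.exp_pos _)]
      congr 1
      ring
    calc ∑ t ∈ Finset.range T, |d n t|
        = |α| * ∑ t ∈ Finset.range T, Real.exp (-(t : ℝ) * (Δt / τ n)) := by
          rw [Finset.mul_sum]; exact Finset.sum_congr rfl (fun t _ => habs t)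
      _ ≤ |α| * ((Δt / τ n + 1) / (Δt / τ n)) :=
          mul_le_mul_of_nonneg_left hsum (abs_nonneg α)
      _ = |α| * ((Δt + τ n) / Δt) := by
          congr 1
          field_simp
      _ ≤ |α| * (Δt + τmax) / Δt := by
          rw [mul_div_assoc]
          apply mul_le_mul_of_nonneg_left _ (abs_nonneg α)
          gcongr
  -- assemble
  have hsum2 : ∑ n : Fin N, |w n| * ∑ t ∈ Finset.range T, |d n t|
      ≤ ∑ n : Fin N, |w n| * (|α| * (Δt + τmax) / Δt) := by
    apply Finset.sum_le_sum
    intro n _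
    exact mul_le_mul_of_nonneg_left (hkey n) (abs_nonneg _)
  calc (1 / (T : ℝ)) * ∑ n : Fin N, |w n| * ∑ t ∈ Finset.range T, |d n t|
      ≤ (1 / (T : ℝ)) * ∑ n : Fin N, |w n| * (|α| * (Δt + τmax) / Δt) := by
        apply mul_le_mul_of_nonneg_left hsum2
        positivity
    _ = (∑ n : Fin N, |w n|) * |α| * (Δt + τmax) / ((T : ℝ) * Δt) := by
        rw [← Finset.sum_mul]
        field_simp
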